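/- Under the stated IBCN assumptions, given ε > 0, let K_ε^block = {k ≥ 0 : ‖∇_{I_k} f(x_{k+1})‖ ≥ ε} and suppose k̄ is the first iteration index not belonging to K_ε^block. Then k̄ ≤ (1 + |log γ₁|/log γ₂) ((f(x₀) − f_min)/c₂) ε^{−3/2} + (1/log γ₂) log(σ_max/σ₀), where c₂ = η₁ (σ_min/6) (τ + (σ_max + L)/2)^{−3/2}. -/

import Mathlib

open scoped RealInnerProductSpace

noncomputable section

/-- `U_I`: extension by zero from block coordinates to full coordinates. -/
def blockIncl {n : ℕ} (I : Finset (Fin n)) :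
    EuclideanSpace ℝ ↥I →ₗ[ℝ] EuclideanSpace ℝ (Fin n) where
  toFun s := WithLp.toLp 2 (fun i => if h : i ∈ I then s ⟨i, h⟩ else 0)
  map_add' s t := by ext i; by_cases h : i ∈ I <;> simp [h]
  map_smul' c s := by ext i; by_cases h : i ∈ I <;> simp [h]

/-- `U_Iᵀ`: restriction of a vector to the block coordinates. -/
def blockRestr {n : ℕ} (I : Finset (Fin n)) :
    EuclideanSpace ℝ (Fin n) →ₗ[ℝ] EuclideanSpace ℝ ↥I where
  toFun x := WithLp.toLp 2 (fun i => x i)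
  map_add' x y := by ext i; simp
  map_smul' c x := by ext i; simp

/-- Block Hessian `U_Iᵀ H U_I` as a continuous linear map. -/
def blockHess {n : ℕ} (I : Finset (Fin n))
    (H : EuclideanSpace ℝ (Fin n) →L[ℝ] EuclideanSpace ℝ (Fin n)) :
    EuclideanSpace ℝ ↥I →L[ℝ] EuclideanSpace ℝ ↥I :=
  LinearMap.toContinuousLinearMap
    ((blockRestr I) ∘ₗ ((H : EuclideanSpace ℝ (Fin n) →ₗ[ℝ] EuclideanSpace ℝ (Fin n)) ∘ₗ blockIncl I))

/-- Quadratic model `q(s) = f₀ + gᵀs + (1/2) sᵀ H s`. -/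
def quadModel {E : Type*} [NormedAddCommGroup E] [InnerProductSpace ℝ E]
    (f₀ : ℝ) (g : E) (H : E →L[ℝ] E) (s : E) : ℝ :=
  f₀ + ⟪g, s⟫ + (1 / 2) * ⟪s, H s⟫

/-- Cubic model `m(s) = q(s) + (σ/6) ‖s‖³`. -/
def cubicModel {E : Type*} [NormedAddCommGroup E] [InnerProductSpace ℝ E]
    (f₀ : ℝ) (g : E) (H : E →L[ℝ] E) (σ : ℝ) (s : E) : ℝ :=
  quadModel f₀ g H s + σ / 6 * ‖s‖ ^ 3

/-- Gradient of the cubic model: `∇m(s) = g + H s + (σ/2) ‖s‖ s`. -/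
def cubicModelGrad {E : Type*} [NormedAddCommGroup E] [InnerProductSpace ℝ E]
    (g : E) (H : E →L[ℝ] E) (σ : ℝ) (s : E) : E :=
  g + H s + (σ / 2 * ‖s‖) • s

/-- The stepsize `α̂ = min{β/‖H‖, √(3β/(σ‖g‖))}`, the first argument being `+∞` if `H = 0`. -/
def alphaHat {E : Type*} [NormedAddCommGroup E] [InnerProductSpace ℝ E]
    (β σ : ℝ) (g : E) (H : E →L[ℝ] E) : ℝ :=
  haveI := Classical.dec (H = 0)
  if H = 0 then Real.sqrt (3 * β / (σ * ‖g‖))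
  else min (β / ‖H‖) (Real.sqrt (3 * β / (σ * ‖g‖)))

/-- The Cauchy-like point `ŝ = -α̂ g`. -/
def sHat {E : Type*} [NormedAddCommGroup E] [InnerProductSpace ℝ E]
    (β σ : ℝ) (g : E) (H : E →L[ℝ] E) : E :=
  -(alphaHat β σ g H) • g

section Aux

variable {n : ℕ} (I : Finset (Fin n))

lemma blockRestr_blockIncl (s : EuclideanSpace ℝ ↥I) :
    blockRestr I (blockIncl I s) = s := by
  ext i
  simp [blockRestr, blockIncl]

lemma inner_blockIncl (s : EuclideanSpace ℝ ↥I) (v : EuclideanSpace ℝ (Fin n)) :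
    ⟪blockIncl I s, v⟫ = ⟪s, blockRestr I v⟫ := by
  simp only [PiLp.inner_apply, RCLike.inner_apply, blockIncl, blockRestr,
    LinearMap.coe_mk, AddHom.coe_mk, conj_trivial, PiLp.toLp_apply]
  have h1 : ∀ i : Fin n, (if h : i ∈ I then s ⟨i, h⟩ else 0) * v i
      = (if h : i ∈ I then s ⟨i, h⟩ * v i else 0) := by
    intro i; by_cases h : i ∈ I <;> simp [h]
  simp only [mul_comm (v.ofLp _), h1]
  rw [show (Finset.univ : Finset ↥I) = I.attach from rfl]
  calc (∑ i : Fin n, if h : i ∈ I then s ⟨i, h⟩ * v i else 0)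
      = ∑ i ∈ I, (if h : i ∈ I then s ⟨i, h⟩ * v i else 0) :=
        (Finset.sum_subset (Finset.subset_univ I) (by intro i _ hi; simp [hi])).symm
    _ = ∑ x ∈ I.attach, (if h : (x : Fin n) ∈ I then s ⟨x, h⟩ * v x else 0) :=
        (Finset.sum_attach I _).symm
    _ = ∑ x ∈ I.attach, s x * v x := by
        apply Finset.sum_congr rfl
        intro i _; simp [i.2]

lemma norm_blockIncl (s : EuclideanSpace ℝ ↥I) : ‖blockIncl I s‖ = ‖s‖ := by
  have h : ⟪blockIncl I s, blockIncl I s⟫ = ⟪s, s⟫ := by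
    rw [inner_blockIncl, blockRestr_blockIncl]
  rw [real_inner_self_eq_norm_sq, real_inner_self_eq_norm_sq] at h
  have := congrArg Real.sqrt h
  rwa [Real.sqrt_sq (norm_nonneg _), Real.sqrt_sq (norm_nonneg _)] at this

lemma norm_blockRestr_le (v : EuclideanSpace ℝ (Fin n)) :
    ‖blockRestr I v‖ ≤ ‖v‖ := by
  have h2 : ⟪blockRestr I v, blockRestr I v⟫ ≤ ⟪v, v⟫ := by
    simp only [PiLp.inner_apply, RCLike.inner_apply, blockRestr,
      LinearMap.coe_mk, AddHom.coe_mk, conj_trivial]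
    rw [show (Finset.univ : Finset ↥I) = I.attach from rfl,
      Finset.sum_attach I (fun i => v i * v i)]
    apply Finset.sum_le_sum_of_subset_of_nonneg (Finset.subset_univ I)
    intro i _ _; exact mul_self_nonneg _
  rw [real_inner_self_eq_norm_sq, real_inner_self_eq_norm_sq] at h2
  have := Real.sqrt_le_sqrt h2
  rwa [Real.sqrt_sq (norm_nonneg _), Real.sqrt_sq (norm_nonneg _)] at this

lemma blockHess_apply (H : EuclideanSpace ℝ (Fin n) →L[ℝ] EuclideanSpace ℝ (Fin n))
    (s : EuclideanSpace ℝ ↥I) :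
    blockHess I H s = blockRestr I (H (blockIncl I s)) := rfl

lemma inner_blockHess (H : EuclideanSpace ℝ (Fin n) →L[ℝ] EuclideanSpace ℝ (Fin n))
    (s : EuclideanSpace ℝ ↥I) :
    ⟪s, blockHess I H s⟫ = ⟪blockIncl I s, H (blockIncl I s)⟫ := by
  rw [blockHess_apply, ← inner_blockIncl]

lemma norm_blockHess_le (H : EuclideanSpace ℝ (Fin n) →L[ℝ] EuclideanSpace ℝ (Fin n)) :
    ‖blockHess I H‖ ≤ ‖H‖ := by
  apply ContinuousLinearMap.opNorm_le_bound _ (norm_nonneg H)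
  intro s
  rw [blockHess_apply]
  calc ‖blockRestr I (H (blockIncl I s))‖ ≤ ‖H (blockIncl I s)‖ := norm_blockRestr_le _ _
    _ ≤ ‖H‖ * ‖blockIncl I s‖ := H.le_opNorm _
    _ = ‖H‖ * ‖s‖ := by rw [norm_blockIncl]

end Aux
section Taylor

variable {n : ℕ} {f : EuclideanSpace ℝ (Fin n) → ℝ}
  {gradf : EuclideanSpace ℝ (Fin n) → EuclideanSpace ℝ (Fin n)}
  {hessf : EuclideanSpace ℝ (Fin n) → (EuclideanSpace ℝ (Fin n) →L[ℝ] EuclideanSpace ℝ (Fin n))}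
  {L : ℝ}

lemma hessf_cont (hlip : ∀ x y, ‖hessf x - hessf y‖ ≤ L * ‖x - y‖) :
    Continuous hessf := by
  rcases le_or_gt L 0 with h | h
  · have : ∀ x y, hessf x = hessf y := by
      intro x y
      have := hlip x y
      have h2 : L * ‖x - y‖ ≤ 0 := mul_nonpos_of_nonpos_of_nonneg h (norm_nonneg _)
      have : ‖hessf x - hessf y‖ ≤ 0 := le_trans this h2
      have := le_antisymm this (norm_nonneg _)
      rwa [norm_eq_zero, sub_eq_zero] at this
    have : hessf = fun _ => hessf 0 := funext fun x => this x 0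
    rw [this]; exact continuous_const
  · have : LipschitzWith ⟨L, h.le⟩ hessf := by
      apply LipschitzWith.of_dist_le_mul
      intro a b
      rw [dist_eq_norm, dist_eq_norm]
      exact hlip a b
    exact this.continuous

lemma line_hasDerivAt (x u : EuclideanSpace ℝ (Fin n)) (t : ℝ) :
    HasDerivAt (fun t : ℝ => x + t • u) u t := by
  simpa using ((hasDerivAt_id t).smul_const u).const_add x

lemma taylor_grad (hhessf : ∀ x, HasFDerivAt gradf (hessf x) x)
    (hlip : ∀ x y, ‖hessf x - hessf y‖ ≤ L * ‖x - y‖) (hL : 0 ≤ L)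
    (x u : EuclideanSpace ℝ (Fin n)) :
    ‖gradf (x + u) - gradf x - hessf x u‖ ≤ L / 2 * ‖u‖ ^ 2 := by
  set g : ℝ → EuclideanSpace ℝ (Fin n) := fun t => gradf (x + t • u) - t • hessf x u with hg
  set d : ℝ → EuclideanSpace ℝ (Fin n) := fun t => hessf (x + t • u) u - hessf x u with hd
  have hderiv : ∀ t : ℝ, HasDerivAt g (d t) t := by
    intro t
    have h1 : HasDerivAt (fun t : ℝ => gradf (x + t • u)) (hessf (x + t • u) u) t :=
      (hhessf (x + t • u)).comp_hasDerivAt t (line_hasDerivAt x u t)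
    have h2 : HasDerivAt (fun t : ℝ => t • hessf x u) (hessf x u) t := by
      simpa using (hasDerivAt_id t).smul_const (hessf x u)
    exact h1.sub h2
  have hdcont : Continuous d := by
    have h1 : Continuous fun t : ℝ => x + t • u :=
      continuous_const.add (continuous_id.smul continuous_const)
    exact ((hessf_cont hlip).comp h1).clm_apply continuous_const |>.sub continuous_const
  have hint : IntervalIntegrable d MeasureTheory.volume 0 1 :=
    hdcont.intervalIntegrable 0 1
  have hftc : ∫ t in (0:ℝ)..1, d t = g 1 - g 0 :=
    intervalIntegral.integral_eq_sub_of_hasDerivAt (fun t _ => hderiv t) hint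
  have hval : g 1 - g 0 = gradf (x + u) - gradf x - hessf x u := by
    simp [hg]; abel
  have hbound : ‖∫ t in (0:ℝ)..1, d t‖ ≤ |∫ t in (0:ℝ)..1, L * ‖u‖ ^ 2 * t| := by
    apply intervalIntegral.norm_integral_le_abs_of_norm_le
    · filter_upwards [MeasureTheory.ae_restrict_mem measurableSet_Ioc] with t ht
      rw [Set.uIoc_of_le (by norm_num : (0:ℝ) ≤ 1)] at ht
      have ht0 : 0 ≤ t := ht.1.le
      calc ‖d t‖ = ‖(hessf (x + t • u) - hessf x) u‖ := by simp [hd]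
        _ ≤ ‖hessf (x + t • u) - hessf x‖ * ‖u‖ := (hessf (x + t • u) - hessf x).le_opNorm u
        _ ≤ (L * ‖t • u‖) * ‖u‖ := by
            apply mul_le_mul_of_nonneg_right _ (norm_nonneg u)
            simpa only [add_sub_cancel_left] using hlip (x + t • u) x
        _ = L * ‖u‖ ^ 2 * t := by
            rw [norm_smul, Real.norm_eq_abs, abs_of_nonneg ht0]; ring
    · exact (continuous_const.mul continuous_id).intervalIntegrable 0 1
  have hval2 : ∫ t in (0:ℝ)..1, L * ‖u‖ ^ 2 * t = L * ‖u‖ ^ 2 / 2 := by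
    rw [intervalIntegral.integral_const_mul]
    simp [integral_id]
    ring
  rw [hftc, hval] at hbound
  rw [hval2] at hbound
  calc ‖gradf (x + u) - gradf x - hessf x u‖ ≤ |L * ‖u‖ ^ 2 / 2| := hbound
    _ = L / 2 * ‖u‖ ^ 2 := by rw [abs_of_nonneg (by positivity)]; ring

end Taylor
section Taylor2

variable {n : ℕ} {f : EuclideanSpace ℝ (Fin n) → ℝ}
  {gradf : EuclideanSpace ℝ (Fin n) → EuclideanSpace ℝ (Fin n)}
  {hessf : EuclideanSpace ℝ (Fin n) → (EuclideanSpace ℝ (Fin n) →L[ℝ] EuclideanSpace ℝ (Fin n))}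
  {L : ℝ}

lemma taylor_f (hgradf : ∀ x, HasGradientAt f (gradf x) x)
    (hhessf : ∀ x, HasFDerivAt gradf (hessf x) x)
    (hlip : ∀ x y, ‖hessf x - hessf y‖ ≤ L * ‖x - y‖) (hL : 0 ≤ L)
    (x u : EuclideanSpace ℝ (Fin n)) :
    f (x + u) ≤ f x + ⟪gradf x, u⟫ + 1 / 2 * ⟪u, hessf x u⟫ + L / 6 * ‖u‖ ^ 3 := by
  have hgcont : Continuous gradf := by
    rw [continuous_iff_continuousAt]
    exact fun y => (hhessf y).differentiableAt.continuousAt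
  set φ' : ℝ → ℝ := fun t => ⟪gradf (x + t • u), u⟫ with hφ'
  have hderiv : ∀ t : ℝ, HasDerivAt (fun t : ℝ => f (x + t • u)) (φ' t) t := by
    intro t
    have h1 := (hgradf (x + t • u)).hasFDerivAt.comp_hasDerivAt t (line_hasDerivAt x u t)
    simpa [hφ', InnerProductSpace.toDual_apply_apply, Function.comp_def] using h1
  have hcont : Continuous φ' := by
    have h1 : Continuous fun t : ℝ => x + t • u :=
      continuous_const.add (continuous_id.smul continuous_const)
    exact (hgcont.comp h1).inner continuous_const
  have hint : IntervalIntegrable φ' MeasureTheory.volume 0 1 :=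
    hcont.intervalIntegrable 0 1
  have hftc : ∫ t in (0:ℝ)..1, φ' t = f (x + u) - f x := by
    have := intervalIntegral.integral_eq_sub_of_hasDerivAt (fun t (_ : t ∈ Set.uIcc 0 1) => hderiv t) hint
    simpa using this
  set b : ℝ → ℝ := fun t => ⟪gradf x, u⟫ + t * ⟪hessf x u, u⟫ + L / 2 * ‖u‖ ^ 3 * t ^ 2 with hb
  have hbcont : Continuous b := by
    apply Continuous.add
    apply Continuous.add continuous_const
    · exact continuous_id.mul continuous_const
    · exact continuous_const.mul (continuous_pow 2)
  have hmono : ∀ t ∈ Set.Icc (0:ℝ) 1, φ' t ≤ b t := by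
    intro t ht
    have ht0 : 0 ≤ t := ht.1
    have key := taylor_grad hhessf hlip hL x (t • u)
    have hsmul : hessf x (t • u) = t • hessf x u := by
      rw [map_smul]
    have h2 : φ' t - (⟪gradf x, u⟫ + t * ⟪hessf x u, u⟫)
        = ⟪gradf (x + t • u) - gradf x - hessf x (t • u), u⟫ := by
      rw [hsmul, inner_sub_left, inner_sub_left, inner_smul_left]
      simp [hφ']
      ring
    have h3 : ⟪gradf (x + t • u) - gradf x - hessf x (t • u), u⟫ ≤ L / 2 * ‖t • u‖ ^ 2 * ‖u‖ := by
      calc ⟪gradf (x + t • u) - gradf x - hessf x (t • u), u⟫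
          ≤ ‖gradf (x + t • u) - gradf x - hessf x (t • u)‖ * ‖u‖ := real_inner_le_norm _ _
        _ ≤ L / 2 * ‖t • u‖ ^ 2 * ‖u‖ := mul_le_mul_of_nonneg_right key (norm_nonneg u)
    have h4 : L / 2 * ‖t • u‖ ^ 2 * ‖u‖ = L / 2 * ‖u‖ ^ 3 * t ^ 2 := by
      rw [norm_smul, Real.norm_eq_abs, abs_of_nonneg ht0]; ring
    have := h2 ▸ h3
    rw [h4] at this
    simp only [hb]
    linarith
  have hintle : ∫ t in (0:ℝ)..1, φ' t ≤ ∫ t in (0:ℝ)..1, b t := by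
    apply intervalIntegral.integral_mono_on (by norm_num) hint (hbcont.intervalIntegrable 0 1) hmono
  have hbval : ∫ t in (0:ℝ)..1, b t
      = ⟪gradf x, u⟫ + 1 / 2 * ⟪hessf x u, u⟫ + L / 6 * ‖u‖ ^ 3 := by
    simp only [hb]
    rw [intervalIntegral.integral_add, intervalIntegral.integral_add]
    · rw [intervalIntegral.integral_const, intervalIntegral.integral_mul_const, integral_id,
        intervalIntegral.integral_const_mul, integral_pow]
      push_cast
      rw [smul_eq_mul]
      ring
    · exact continuous_const.intervalIntegrable 0 1
    · exact (continuous_id.mul continuous_const).intervalIntegrable 0 1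
    · exact (continuous_const.add (continuous_id.mul continuous_const)).intervalIntegrable 0 1
    · exact (continuous_const.mul (continuous_pow 2)).intervalIntegrable 0 1
  rw [hftc] at hintle
  rw [hbval] at hintle
  have hcomm : ⟪hessf x u, u⟫ = ⟪u, hessf x u⟫ := real_inner_comm _ _
  linarith [hintle, hcomm.le, hcomm.ge]

end Taylor2
section Cauchy

variable {E : Type*} [NormedAddCommGroup E] [InnerProductSpace ℝ E]

lemma alphaHat_nonneg (β σ : ℝ) (g : E) (H : E →L[ℝ] E) (hβ : 0 ≤ β) :
    0 ≤ alphaHat β σ g H := by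
  unfold alphaHat
  split
  · exact Real.sqrt_nonneg _
  · exact le_min (div_nonneg hβ (norm_nonneg _)) (Real.sqrt_nonneg _)

lemma cauchy_decrease (f₀ : ℝ) (g : E) (H : E →L[ℝ] E) {σ β : ℝ}
    (hσ : 0 < σ) (hβ0 : 0 < β) (hβ1 : β < 1) (hg : g ≠ 0) :
    cubicModel f₀ g H σ (sHat β σ g H) ≤ f₀ := by
  set α := alphaHat β σ g H with hα
  have hα0 : 0 ≤ α := alphaHat_nonneg β σ g H hβ0.le
  have hgn : 0 < ‖g‖ := norm_pos_iff.mpr hg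
  have hαH : α * ‖H‖ ≤ β := by
    by_cases hH : H = 0
    · simp [hH]; positivity
    · have hHn : 0 < ‖H‖ := norm_pos_iff.mpr hH
      have : α ≤ β / ‖H‖ := by rw [hα]; unfold alphaHat; rw [if_neg hH]; exact min_le_left _ _
      calc α * ‖H‖ ≤ (β / ‖H‖) * ‖H‖ := mul_le_mul_of_nonneg_right this hHn.le
        _ = β := div_mul_cancel₀ β hHn.ne'
  have hα2 : α ^ 2 * (σ * ‖g‖) ≤ 3 * β := by
    have hr : (0:ℝ) < σ * ‖g‖ := mul_pos hσ hgn
    have hle : α ≤ Real.sqrt (3 * β / (σ * ‖g‖)) := by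
      rw [hα]; unfold alphaHat; split
      · exact le_refl _
      · exact min_le_right _ _
    have := pow_le_pow_left₀ hα0 hle 2
    rw [Real.sq_sqrt (by positivity)] at this
    calc α ^ 2 * (σ * ‖g‖) ≤ (3 * β / (σ * ‖g‖)) * (σ * ‖g‖) :=
          mul_le_mul_of_nonneg_right this hr.le
      _ = 3 * β := div_mul_cancel₀ _ hr.ne'
  have hval : cubicModel f₀ g H σ (sHat β σ g H)
      = f₀ - α * ‖g‖ ^ 2 + α ^ 2 / 2 * ⟪g, H g⟫ + σ / 6 * (α ^ 3 * ‖g‖ ^ 3) := by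
    unfold cubicModel quadModel sHat
    rw [← hα]
    rw [inner_smul_right, map_smul, inner_smul_left, inner_smul_right]
    rw [norm_smul, Real.norm_eq_abs, abs_neg, abs_of_nonneg hα0,
      real_inner_self_eq_norm_sq]
    simp only [conj_trivial]
    ring
  rw [hval]
  have hinner : ⟪g, H g⟫ ≤ ‖H‖ * ‖g‖ ^ 2 := by
    calc ⟪g, H g⟫ ≤ ‖g‖ * ‖H g‖ := real_inner_le_norm _ _
      _ ≤ ‖g‖ * (‖H‖ * ‖g‖) := mul_le_mul_of_nonneg_left (H.le_opNorm g) hgn.le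
      _ = ‖H‖ * ‖g‖ ^ 2 := by ring
  have h1 : α ^ 2 / 2 * ⟪g, H g⟫ ≤ α * β * ‖g‖ ^ 2 / 2 := by
    calc α ^ 2 / 2 * ⟪g, H g⟫ ≤ α ^ 2 / 2 * (‖H‖ * ‖g‖ ^ 2) := by
          apply mul_le_mul_of_nonneg_left hinner (by positivity)
      _ = (α * ‖H‖) * (α * ‖g‖ ^ 2) / 2 := by ring
      _ ≤ β * (α * ‖g‖ ^ 2) / 2 := by
          have hx : (0:ℝ) ≤ α * ‖g‖ ^ 2 := by positivity
          have := mul_le_mul_of_nonneg_right hαH hx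
          linarith
      _ = α * β * ‖g‖ ^ 2 / 2 := by ring
  have h2 : σ / 6 * (α ^ 3 * ‖g‖ ^ 3) ≤ α * β * ‖g‖ ^ 2 / 2 := by
    have : σ / 6 * (α ^ 3 * ‖g‖ ^ 3) = (α ^ 2 * (σ * ‖g‖)) * (α * ‖g‖ ^ 2) / 6 := by ring
    rw [this]
    calc (α ^ 2 * (σ * ‖g‖)) * (α * ‖g‖ ^ 2) / 6 ≤ (3 * β) * (α * ‖g‖ ^ 2) / 6 := by
          have hx : (0:ℝ) ≤ α * ‖g‖ ^ 2 := by positivity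
          have := mul_le_mul_of_nonneg_right hα2 hx
          linarith
      _ = α * β * ‖g‖ ^ 2 / 2 := by ring
  nlinarith [mul_nonneg hα0 (sq_nonneg ‖g‖), hβ1, mul_nonneg (mul_nonneg hα0 hβ0.le) (sq_nonneg ‖g‖)]

end Cauchy
set_option maxHeartbeats 2000000 in
theorem stmt16 (n : ℕ) (hn : 0 < n)
    (f : EuclideanSpace ℝ (Fin n) → ℝ)
    (gradf : EuclideanSpace ℝ (Fin n) → EuclideanSpace ℝ (Fin n))
    (hessf : EuclideanSpace ℝ (Fin n) → (EuclideanSpace ℝ (Fin n) →L[ℝ] EuclideanSpace ℝ (Fin n)))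
    (hf : ContDiff ℝ 2 f)
    (hgradf : ∀ x, HasGradientAt f (gradf x) x)
    (hhessf : ∀ x, HasFDerivAt gradf (hessf x) x)
    (L : ℝ) (hL : 0 < L)
    (hlipL : ∀ x y, ‖hessf x - hessf y‖ ≤ L * ‖x - y‖)
    (σmin σ₀ η₁ η₂ γ₁ γ₂ γ₃ τ β θ : ℝ)
    (hσmin : 0 < σmin) (hσ₀ : σmin ≤ σ₀)
    (hη₁0 : 0 < η₁) (hη₁₂ : η₁ ≤ η₂) (hη₂1 : η₂ < 1)
    (hγ₁0 : 0 < γ₁) (hγ₁1 : γ₁ ≤ 1) (hγ₂ : 1 < γ₂) (hγ₂₃ : γ₂ ≤ γ₃)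
    (hτ : 0 ≤ τ) (hβ0 : 0 < β) (hβ1 : β < 1) (hθ0 : 0 < θ) (hθ1 : θ ≤ 1)
    (x : ℕ → EuclideanSpace ℝ (Fin n)) (I : ℕ → Finset (Fin n))
    (s : ∀ k : ℕ, EuclideanSpace ℝ ↥(I k)) (σ : ℕ → ℝ) (ρ : ℕ → ℝ)
    (hσzero : σ 0 = σ₀) (hσpos : ∀ k, 0 < σ k)
    (hgne : ∀ k, gradf (x k) ≠ 0)
    (hgreedy : ∀ k, θ * ‖gradf (x k)‖ ≤ ‖blockRestr (I k) (gradf (x k))‖)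
    (hstepg : ∀ k, ‖cubicModelGrad (blockRestr (I k) (gradf (x k)))
        (blockHess (I k) (hessf (x k))) (σ k) (s k)‖ ≤ τ * ‖s k‖ ^ 2)
    (hstepm : ∀ k, cubicModel (f (x k)) (blockRestr (I k) (gradf (x k)))
        (blockHess (I k) (hessf (x k))) (σ k) (s k) ≤
      cubicModel (f (x k)) (blockRestr (I k) (gradf (x k)))
        (blockHess (I k) (hessf (x k))) (σ k)
        (sHat β (σ k) (blockRestr (I k) (gradf (x k))) (blockHess (I k) (hessf (x k)))))
    (hρ : ∀ k, ρ k = (f (x k) - f (x k + blockIncl (I k) (s k))) /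
      (quadModel (f (x k)) (blockRestr (I k) (gradf (x k))) (blockHess (I k) (hessf (x k))) 0 -
       quadModel (f (x k)) (blockRestr (I k) (gradf (x k))) (blockHess (I k) (hessf (x k))) (s k)))
    (hx : ∀ k, x (k + 1) = if η₁ ≤ ρ k then x k + blockIncl (I k) (s k) else x k)
    (hσ1 : ∀ k, η₂ ≤ ρ k → max σmin (γ₁ * σ k) ≤ σ (k + 1) ∧ σ (k + 1) ≤ σ k)
    (hσ2 : ∀ k, η₁ ≤ ρ k → ρ k < η₂ → σ k ≤ σ (k + 1) ∧ σ (k + 1) ≤ γ₂ * σ k)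
    (hσ3 : ∀ k, ρ k < η₁ → γ₂ * σ k ≤ σ (k + 1) ∧ σ (k + 1) ≤ γ₃ * σ k)
    (fmin Hmax : ℝ) (hHmax : 0 < Hmax)
    (hfmin : ∀ y, f y ≤ f (x 0) → fmin ≤ f y)
    (hHb : ∀ y, f y ≤ f (x 0) → ‖hessf y‖ ≤ Hmax)
    (ε : ℝ) (hε : 0 < ε) (kbar : ℕ)
    (hk1 : ∀ j < kbar, ε ≤ ‖blockRestr (I j) (gradf (x (j + 1)))‖)
    (hk2 : ‖blockRestr (I kbar) (gradf (x (kbar + 1)))‖ < ε) :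
    (kbar : ℝ) ≤ (1 + |Real.log γ₁| / Real.log γ₂) *
        ((f (x 0) - fmin) /
          (η₁ * (σmin / 6) *
            (τ + (max σ₀ (γ₃ * L / (1 - η₂)) + L) / 2) ^ (-(3 / 2 : ℝ)))) *
        ε ^ (-(3 / 2 : ℝ)) +
      1 / Real.log γ₂ * Real.log (max σ₀ (γ₃ * L / (1 - η₂)) / σ₀) := by
  classical
  set σmax := max σ₀ (γ₃ * L / (1 - η₂)) with hσmaxdef
  have hσ₀pos : 0 < σ₀ := lt_of_lt_of_le hσmin hσ₀
  have hσmaxpos : 0 < σmax := lt_of_lt_of_le hσ₀pos (le_max_left _ _)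
  have hγ₃1 : 1 < γ₃ := lt_of_lt_of_le hγ₂ hγ₂₃
  -- nonvanishing of block gradient
  have hgIne : ∀ k, blockRestr (I k) (gradf (x k)) ≠ 0 := by
    intro k
    have h1 : 0 < θ * ‖gradf (x k)‖ := mul_pos hθ0 (norm_pos_iff.mpr (hgne k))
    have := lt_of_lt_of_le h1 (hgreedy k)
    exact fun h => by rw [h] at this; simp at this
  -- nonzero step
  have hsne : ∀ k, s k ≠ 0 := by
    intro k hs
    have h0 : cubicModelGrad (blockRestr (I k) (gradf (x k)))
        (blockHess (I k) (hessf (x k))) (σ k) (s k) = blockRestr (I k) (gradf (x k)) := by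
      rw [hs]; simp [cubicModelGrad]
    have := hstepg k
    rw [h0, hs] at this
    simp at this
    exact hgIne k this
  -- model decrease
  have hq0 : ∀ k, quadModel (f (x k)) (blockRestr (I k) (gradf (x k)))
      (blockHess (I k) (hessf (x k))) 0 = f (x k) := by
    intro k; simp [quadModel]
  have hD : ∀ k, σ k / 6 * ‖s k‖ ^ 3 ≤
      quadModel (f (x k)) (blockRestr (I k) (gradf (x k))) (blockHess (I k) (hessf (x k))) 0 -
      quadModel (f (x k)) (blockRestr (I k) (gradf (x k))) (blockHess (I k) (hessf (x k))) (s k) := by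
    intro k
    have h1 := le_trans (hstepm k)
      (cauchy_decrease (f (x k)) _ _ (hσpos k) hβ0 hβ1 (hgIne k))
    rw [hq0 k]
    unfold cubicModel at h1
    linarith
  have hDpos : ∀ k, 0 <
      quadModel (f (x k)) (blockRestr (I k) (gradf (x k))) (blockHess (I k) (hessf (x k))) 0 -
      quadModel (f (x k)) (blockRestr (I k) (gradf (x k))) (blockHess (I k) (hessf (x k))) (s k) := by
    intro k
    refine lt_of_lt_of_le ?_ (hD k)
    have hsk : 0 < ‖s k‖ := norm_pos_iff.mpr (hsne k)
    have := hσpos k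
    have : 0 < σ k / 6 * ‖s k‖ ^ 3 := by positivity
    exact this
  -- decrease on successful steps
  have hdec : ∀ k, η₁ ≤ ρ k →
      η₁ * (σ k / 6 * ‖s k‖ ^ 3) ≤ f (x k) - f (x k + blockIncl (I k) (s k)) := by
    intro k hk
    have h2 : η₁ ≤ (f (x k) - f (x k + blockIncl (I k) (s k))) /
        (quadModel (f (x k)) (blockRestr (I k) (gradf (x k))) (blockHess (I k) (hessf (x k))) 0 -
         quadModel (f (x k)) (blockRestr (I k) (gradf (x k)))
           (blockHess (I k) (hessf (x k))) (s k)) := by rw [← hρ k]; exact hk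
    have h1 := (le_div_iff₀ (hDpos k)).mp h2
    calc η₁ * (σ k / 6 * ‖s k‖ ^ 3) ≤ η₁ * _ := mul_le_mul_of_nonneg_left (hD k) hη₁0.le
      _ ≤ _ := h1
  -- monotonicity
  have hmono : ∀ k, f (x (k + 1)) ≤ f (x k) := by
    intro k
    rw [hx k]
    by_cases h : η₁ ≤ ρ k
    · rw [if_pos h]
      have := hdec k h
      have hpos : 0 ≤ η₁ * (σ k / 6 * ‖s k‖ ^ 3) := by
        have := (hσpos k).le
        positivity
      linarith
    · rw [if_neg h]
  have hlev : ∀ k, f (x k) ≤ f (x 0) := by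
    intro k
    induction k with
    | zero => exact le_refl _
    | succ m ih => exact le_trans (hmono m) ih
  -- quad model identity
  have hquad : ∀ k (s' : EuclideanSpace ℝ ↥(I k)),
      quadModel (f (x k)) (blockRestr (I k) (gradf (x k))) (blockHess (I k) (hessf (x k))) s'
      = f (x k) + ⟪gradf (x k), blockIncl (I k) s'⟫
        + 1 / 2 * ⟪blockIncl (I k) s', hessf (x k) (blockIncl (I k) s')⟫ := by
    intro k s'
    unfold quadModel
    rw [inner_blockHess]
    congr 2
    rw [real_inner_comm, ← inner_blockIncl, real_inner_comm]
  -- Taylor overestimation of f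
  have hA : ∀ k, f (x k + blockIncl (I k) (s k)) ≤
      quadModel (f (x k)) (blockRestr (I k) (gradf (x k))) (blockHess (I k) (hessf (x k))) (s k)
      + L / 6 * ‖s k‖ ^ 3 := by
    intro k
    have := taylor_f hgradf hhessf hlipL hL.le (x k) (blockIncl (I k) (s k))
    rw [norm_blockIncl] at this
    rw [hquad k (s k)]
    exact this
  -- lower bound on ρ
  have hρlb : ∀ k, 1 - L / σ k ≤ ρ k := by
    intro k
    rw [hρ k]
    rw [le_div_iff₀ (hDpos k)]
    set D := quadModel (f (x k)) (blockRestr (I k) (gradf (x k))) (blockHess (I k) (hessf (x k))) 0 -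
      quadModel (f (x k)) (blockRestr (I k) (gradf (x k))) (blockHess (I k) (hessf (x k))) (s k)
    have hE : f (x k + blockIncl (I k) (s k)) -
        quadModel (f (x k)) (blockRestr (I k) (gradf (x k))) (blockHess (I k) (hessf (x k))) (s k)
        ≤ L / 6 * ‖s k‖ ^ 3 := by linarith [hA k]
    have h2 : L / 6 * ‖s k‖ ^ 3 ≤ L / σ k * D := by
      have hσne : σ k ≠ 0 := (hσpos k).ne'
      have h3 : L / 6 * ‖s k‖ ^ 3 = L / σ k * (σ k / 6 * ‖s k‖ ^ 3) := by
        field_simp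
      rw [h3]
      apply mul_le_mul_of_nonneg_left (hD k)
      exact div_nonneg hL.le (hσpos k).le
    have hfx : f (x k) - f (x k + blockIncl (I k) (s k))
        = D - (f (x k + blockIncl (I k) (s k)) -
          quadModel (f (x k)) (blockRestr (I k) (gradf (x k)))
            (blockHess (I k) (hessf (x k))) (s k)) := by
      simp only [D, hq0 k]; ring
    rw [hfx]
    have : (1 - L / σ k) * D = D - L / σ k * D := by ring
    rw [this]
    linarith
  -- σ bounded above
  have hσγ₃ : ∀ k, σ (k + 1) ≤ γ₃ * σ k := by
    intro k
    rcases le_or_gt η₂ (ρ k) with h | h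
    · calc σ (k + 1) ≤ σ k := (hσ1 k h).2
        _ ≤ γ₃ * σ k := le_mul_of_one_le_left (hσpos k).le hγ₃1.le
    rcases le_or_gt η₁ (ρ k) with h' | h'
    · calc σ (k + 1) ≤ γ₂ * σ k := (hσ2 k h' h).2
        _ ≤ γ₃ * σ k := mul_le_mul_of_nonneg_right hγ₂₃ (hσpos k).le
    · exact (hσ3 k h').2
  have hσup : ∀ k, σ k ≤ σmax := by
    intro k
    induction k with
    | zero => rw [hσzero]; exact le_max_left _ _
    | succ m ih =>
      rcases le_or_gt (L / (1 - η₂)) (σ m) with h | h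
      · have hρm : η₂ ≤ ρ m := by
          have h1 : L / σ m ≤ 1 - η₂ := by
            rw [div_le_iff₀ (hσpos m)]
            rw [div_le_iff₀ (by linarith : (0:ℝ) < 1 - η₂)] at h
            linarith [h]
          linarith [hρlb m]
        exact le_trans (hσ1 m hρm).2 ih
      · calc σ (m + 1) ≤ γ₃ * σ m := hσγ₃ m
          _ ≤ γ₃ * (L / (1 - η₂)) := mul_le_mul_of_nonneg_left h.le (by linarith)
          _ = γ₃ * L / (1 - η₂) := by ring
          _ ≤ σmax := le_max_right _ _
  -- σ bounded below
  have hσlow : ∀ k, σmin ≤ σ k := by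
    intro k
    induction k with
    | zero => rw [hσzero]; exact hσ₀
    | succ m ih =>
      rcases le_or_gt η₂ (ρ m) with h | h
      · exact le_trans (le_max_left _ _) (hσ1 m h).1
      rcases le_or_gt η₁ (ρ m) with h' | h'
      · exact le_trans ih (hσ2 m h' h).1
      · calc σmin ≤ σ m := ih
          _ ≤ γ₂ * σ m := le_mul_of_one_le_left (hσpos m).le hγ₂.le
          _ ≤ σ (m + 1) := (hσ3 m h').1
  -- successful σ lower recurrence
  have hσsucc : ∀ k, η₁ ≤ ρ k → γ₁ * σ k ≤ σ (k + 1) := by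
    intro k h
    rcases le_or_gt η₂ (ρ k) with h2 | h2
    · exact le_trans (le_max_right _ _) (hσ1 k h2).1
    · calc γ₁ * σ k ≤ 1 * σ k := mul_le_mul_of_nonneg_right hγ₁1 (hσpos k).le
        _ = σ k := one_mul _
        _ ≤ σ (k + 1) := (hσ2 k h h2).1
  have hσfail : ∀ k, ρ k < η₁ → γ₂ * σ k ≤ σ (k + 1) := fun k h => (hσ3 k h).1
  -- gradient bound after step
  set M := τ + (σmax + L) / 2 with hMdef
  have hM : 0 < M := by positivity
  have hgb : ∀ j, ‖blockRestr (I j) (gradf (x j + blockIncl (I j) (s j)))‖ ≤ M * ‖s j‖ ^ 2 := by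
    intro j
    set u := blockIncl (I j) (s j)
    have hT := taylor_grad hhessf hlipL hL.le (x j) u
    rw [norm_blockIncl] at hT
    have hsplit : blockRestr (I j) (gradf (x j + u))
        = blockRestr (I j) (gradf (x j + u) - gradf (x j) - hessf (x j) u)
          + (blockRestr (I j) (gradf (x j)) + blockHess (I j) (hessf (x j)) (s j)) := by
      rw [blockHess_apply]
      rw [map_sub, map_sub]
      abel
    have h1 : ‖blockRestr (I j) (gradf (x j + u) - gradf (x j) - hessf (x j) u)‖
        ≤ L / 2 * ‖s j‖ ^ 2 := le_trans (norm_blockRestr_le _ _) hT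
    have h2 : ‖blockRestr (I j) (gradf (x j)) + blockHess (I j) (hessf (x j)) (s j)‖
        ≤ τ * ‖s j‖ ^ 2 + σ j / 2 * ‖s j‖ ^ 2 := by
      have heq : blockRestr (I j) (gradf (x j)) + blockHess (I j) (hessf (x j)) (s j)
          = cubicModelGrad (blockRestr (I j) (gradf (x j)))
              (blockHess (I j) (hessf (x j))) (σ j) (s j) - (σ j / 2 * ‖s j‖) • s j := by
        unfold cubicModelGrad; abel
      rw [heq]
      calc ‖_ - (σ j / 2 * ‖s j‖) • s j‖
          ≤ ‖cubicModelGrad (blockRestr (I j) (gradf (x j)))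
              (blockHess (I j) (hessf (x j))) (σ j) (s j)‖ + ‖(σ j / 2 * ‖s j‖) • s j‖ :=
            norm_sub_le _ _
        _ ≤ τ * ‖s j‖ ^ 2 + σ j / 2 * ‖s j‖ ^ 2 := by
            apply add_le_add (hstepg j)
            rw [norm_smul, Real.norm_eq_abs,
              abs_of_nonneg (mul_nonneg (by linarith [hσpos j] : (0:ℝ) ≤ σ j / 2)
                (norm_nonneg _))]
            ring_nf
            exact le_refl _
    calc ‖blockRestr (I j) (gradf (x j + u))‖
        ≤ L / 2 * ‖s j‖ ^ 2 + (τ * ‖s j‖ ^ 2 + σ j / 2 * ‖s j‖ ^ 2) := by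
          rw [hsplit]; exact le_trans (norm_add_le _ _) (add_le_add h1 h2)
      _ ≤ M * ‖s j‖ ^ 2 := by
          rw [hMdef]
          nlinarith [sq_nonneg ‖s j‖, hσup j]
  -- counting
  set lg2 := Real.log γ₂ with hlg2def
  have hlg2 : 0 < lg2 := Real.log_pos hγ₂
  set δ := η₁ * (σmin / 6) * (ε / M) ^ ((3:ℝ)/2) with hδdef
  have hεM : 0 < ε / M := div_pos hε hM
  have hδpos : 0 < δ := by
    have h := Real.rpow_pos_of_pos hεM ((3:ℝ)/2)
    positivity
  have hsdec : ∀ j < kbar, η₁ ≤ ρ j → δ ≤ f (x j) - f (x (j + 1)) := by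
    intro j hj hsucc
    have hε2 := hk1 j hj
    rw [hx j, if_pos hsucc] at hε2
    have hs2 : ε / M ≤ ‖s j‖ ^ 2 := by
      rw [div_le_iff₀ hM]
      calc ε ≤ ‖blockRestr (I j) (gradf (x j + blockIncl (I j) (s j)))‖ := hε2
        _ ≤ M * ‖s j‖ ^ 2 := hgb j
        _ = ‖s j‖ ^ 2 * M := mul_comm _ _
    have h3 : (ε / M) ^ ((3:ℝ)/2) ≤ ‖s j‖ ^ 3 := by
      have h4 : (ε / M) ^ ((3:ℝ)/2) ≤ (‖s j‖ ^ 2 : ℝ) ^ ((3:ℝ)/2) :=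
        Real.rpow_le_rpow hεM.le hs2 (by norm_num)
      rw [← Real.rpow_natCast ‖s j‖ 2, ← Real.rpow_mul (norm_nonneg _)] at h4
      have he : ((2:ℕ):ℝ) * ((3:ℝ)/2) = ((3:ℕ):ℝ) := by norm_num
      rwa [he, Real.rpow_natCast] at h4
    have h5 : δ ≤ η₁ * (σ j / 6 * ‖s j‖ ^ 3) := by
      rw [hδdef]
      have h6 : (σmin / 6) * (ε / M) ^ ((3:ℝ)/2) ≤ σ j / 6 * ‖s j‖ ^ 3 := by
        apply mul_le_mul (by linarith [hσlow j]) h3 (Real.rpow_nonneg hεM.le _)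
        linarith [hσpos j]
      calc η₁ * (σmin / 6) * (ε / M) ^ ((3:ℝ)/2)
          = η₁ * ((σmin / 6) * (ε / M) ^ ((3:ℝ)/2)) := by ring
        _ ≤ η₁ * (σ j / 6 * ‖s j‖ ^ 3) := mul_le_mul_of_nonneg_left h6 hη₁0.le
    rw [hx j, if_pos hsucc]
    exact le_trans h5 (hdec j hsucc)
  set p : ℕ → Prop := fun j => η₁ ≤ ρ j with hp
  -- telescoping sum of decreases
  have htel : ∀ m, m ≤ kbar →
      (((Finset.range m).filter p).card : ℝ) * δ ≤ f (x 0) - f (x m) := by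
    intro m
    induction m with
    | zero => intro _; simp
    | succ m ih =>
      intro hm
      have hm' : m ≤ kbar := le_trans (Nat.le_succ m) hm
      have hmlt : m < kbar := lt_of_lt_of_le (Nat.lt_succ_self m) hm
      have ih' := ih hm'
      rw [Finset.range_add_one, Finset.filter_insert]
      by_cases hpm : p m
      · rw [if_pos hpm, Finset.card_insert_of_notMem (by simp)]
        have hd := hsdec m hmlt hpm
        push_cast
        linarith only [hd, ih']
      · rw [if_neg hpm]
        have hxeq : x (m + 1) = x m := by rw [hx m, if_neg hpm]
        rw [hxeq]
        exact ih'
  -- σ product lower bound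
  have hprod : ∀ m, σ₀ * (γ₁ ^ ((Finset.range m).filter p).card *
      γ₂ ^ ((Finset.range m).filter (fun j => ¬ p j)).card) ≤ σ m := by
    intro m
    induction m with
    | zero => simp [hσzero]
    | succ m ih =>
      rw [Finset.range_add_one, Finset.filter_insert, Finset.filter_insert]
      by_cases hpm : p m
      · rw [if_pos hpm, if_neg (by simp [hpm]), Finset.card_insert_of_notMem (by simp)]
        calc σ₀ * (γ₁ ^ (((Finset.range m).filter p).card + 1) *
              γ₂ ^ ((Finset.range m).filter (fun j => ¬ p j)).card)
            = γ₁ * (σ₀ * (γ₁ ^ ((Finset.range m).filter p).card *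
                γ₂ ^ ((Finset.range m).filter (fun j => ¬ p j)).card)) := by ring
          _ ≤ γ₁ * σ m := mul_le_mul_of_nonneg_left ih hγ₁0.le
          _ ≤ σ (m + 1) := hσsucc m hpm
      · rw [if_neg hpm, if_pos (by simp [hpm]), Finset.card_insert_of_notMem (by simp)]
        calc σ₀ * (γ₁ ^ ((Finset.range m).filter p).card *
              γ₂ ^ (((Finset.range m).filter (fun j => ¬ p j)).card + 1))
            = γ₂ * (σ₀ * (γ₁ ^ ((Finset.range m).filter p).card *
                γ₂ ^ ((Finset.range m).filter (fun j => ¬ p j)).card)) := by ring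
          _ ≤ γ₂ * σ m := mul_le_mul_of_nonneg_left ih (by linarith)
          _ ≤ σ (m + 1) := hσfail m (not_le.mp hpm)
  set N := ((Finset.range kbar).filter p).card with hN
  set Nu := ((Finset.range kbar).filter (fun j => ¬ p j)).card with hNu
  have hcard : N + Nu = kbar := by
    rw [hN, hNu]
    rw [Finset.card_filter_add_card_filter_not]
    exact Finset.card_range kbar
  have hfmin' : fmin ≤ f (x kbar) := hfmin _ (hlev kbar)
  have hfinal1 : (N : ℝ) * δ ≤ f (x 0) - fmin := by
    have := htel kbar le_rfl
    linarith only [this, hfmin']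
  have hfinal2 : σ₀ * (γ₁ ^ N * γ₂ ^ Nu) ≤ σmax := le_trans (hprod kbar) (hσup kbar)
  -- logarithms
  have hγ₁N : (0:ℝ) < γ₁ ^ N := pow_pos hγ₁0 N
  have hγ₂Nu : (0:ℝ) < γ₂ ^ Nu := pow_pos (by linarith) Nu
  have hlog : Real.log σ₀ + (N : ℝ) * Real.log γ₁ + (Nu : ℝ) * lg2 ≤ Real.log σmax := by
    have h := Real.log_le_log (by positivity) hfinal2
    rw [Real.log_mul hσ₀pos.ne' (by positivity), Real.log_mul hγ₁N.ne' hγ₂Nu.ne',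
      Real.log_pow, Real.log_pow] at h
    push_cast at h
    linarith only [h]
  have hlogR : Real.log σmax - Real.log σ₀ = Real.log (σmax / σ₀) :=
    (Real.log_div hσmaxpos.ne' hσ₀pos.ne').symm
  have hNuB : (Nu : ℝ) * lg2 ≤ Real.log (σmax / σ₀) - (N : ℝ) * Real.log γ₁ := by
    rw [← hlogR]; linarith only [hlog]
  have habs : |Real.log γ₁| = - Real.log γ₁ :=
    abs_of_nonpos (Real.log_nonpos hγ₁0.le hγ₁1)
  -- bound on N
  set c₂ := η₁ * (σmin / 6) * M ^ (-(3/2 : ℝ)) with hc₂def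
  have hMrpow : 0 < M ^ (-(3/2 : ℝ)) := Real.rpow_pos_of_pos hM _
  have hc₂pos : 0 < c₂ := by rw [hc₂def]; positivity
  have hδeq : δ = c₂ * ε ^ ((3:ℝ)/2) := by
    rw [hδdef, hc₂def, Real.div_rpow hε.le hM.le, Real.rpow_neg hM.le]
    ring
  have hεrpow : 0 < ε ^ ((3:ℝ)/2) := Real.rpow_pos_of_pos hε _
  have hNbound : (N : ℝ) ≤ (f (x 0) - fmin) / c₂ * ε ^ (-(3/2 : ℝ)) := by
    have h5 : (N : ℝ) ≤ (f (x 0) - fmin) / δ := (le_div_iff₀ hδpos).mpr hfinal1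
    have h6 : (f (x 0) - fmin) / δ = (f (x 0) - fmin) / c₂ * ε ^ (-(3/2 : ℝ)) := by
      rw [hδeq, Real.rpow_neg hε.le, div_mul_eq_div_div, div_eq_mul_inv]
    linarith only [h5, h6]
  -- assembly
  have hkk : (kbar : ℝ) = (N : ℝ) + (Nu : ℝ) := by
    rw [← hcard]; push_cast; ring
  have hfac : 0 ≤ 1 + |Real.log γ₁| / lg2 := by
    have h1 : 0 ≤ |Real.log γ₁| / lg2 := div_nonneg (abs_nonneg _) hlg2.le
    linarith only [h1]
  have hNnn : (0:ℝ) ≤ (N : ℝ) := Nat.cast_nonneg N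
  calc (kbar : ℝ) = (N : ℝ) + (Nu : ℝ) := hkk
    _ ≤ (N : ℝ) + (Real.log (σmax / σ₀) - (N : ℝ) * Real.log γ₁) / lg2 := by
        have := (le_div_iff₀ hlg2).mpr hNuB
        linarith only [this]
    _ = (N : ℝ) * (1 + |Real.log γ₁| / lg2) + 1 / lg2 * Real.log (σmax / σ₀) := by
        rw [habs]; field_simp; ring
    _ ≤ ((f (x 0) - fmin) / c₂ * ε ^ (-(3/2 : ℝ))) * (1 + |Real.log γ₁| / lg2)
          + 1 / lg2 * Real.log (σmax / σ₀) := by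
        have := mul_le_mul_of_nonneg_right hNbound hfac
        linarith only [this]
    _ = (1 + |Real.log γ₁| / lg2) * ((f (x 0) - fmin) / c₂) * ε ^ (-(3/2 : ℝ))
          + 1 / lg2 * Real.log (σmax / σ₀) := by ring



end
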